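/- With the setup of the interaction screening loss for an Ising model of ℓ1-width at most γ, the curvature δL*(θ) := L(θ) − L(θ*) − ⟨∇L(θ*), θ − θ*⟩ satisfies δL*(θ) ≥ (e^{-γ}/(2 + 2γ)) · E_μ[(E_u(σ; θ − θ*))²]. -/

import Mathlib

/-!
Write `E_c(θ) = A_c ⬝ θ` with `|A_c i| ≤ 1`, so that the loss is `Σ_c μ_c exp(-A_c ⬝ θ)`. Since
`A_c ⬝ θ = A_c ⬝ θ* + A_c ⬝ Δ` for `Δ = θ - θ*`, the first-order remainder is exactly
`Σ_c μ_c exp(-A_c ⬝ θ*) g(A_c ⬝ Δ)` with `g(x) = e^{-x} - 1 + x`. Each term is bounded below using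
`|A_c ⬝ θ*| ≤ γ`, `|A_c ⬝ Δ| ≤ 2γ` and the elementary inequality `x² ≤ (2 + |x|) g(x)`.
-/

open Finset Real

lemma two_sub_le_two_add_mul_exp_neg {t : ℝ} (ht : 0 ≤ t) : 2 - t ≤ (2 + t) * exp (-t) := by
  let f : ℝ → ℝ := fun t => (2 + t) * exp (-t) + t
  have hf : ∀ t, HasDerivAt f (1 - (1 + t) * exp (-t)) t := fun t => by
    refine ((((hasDerivAt_id' t).const_add 2).fun_mul (hasDerivAt_neg t).exp).fun_add
      (hasDerivAt_id' t)).congr_deriv ?_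
    ring
  have hmono : MonotoneOn f (Set.Ici 0) := by
    refine monotoneOn_of_hasDerivWithinAt_nonneg (convex_Ici 0)
      (fun t _ => (hf t).continuousAt.continuousWithinAt) (fun t _ => (hf t).hasDerivWithinAt) ?_
    intro t _
    have := mul_le_mul_of_nonneg_right (add_one_le_exp t) (exp_pos (-t)).le
    rw [← exp_add, add_neg_cancel, exp_zero] at this
    linarith
  have := hmono Set.self_mem_Ici ht ht
  simp only [f, neg_zero, exp_zero, add_zero, mul_one] at this
  linarith

lemma sq_le_two_add_abs_mul_exp_neg_sub_one_add (x : ℝ) :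
    x ^ 2 ≤ (2 + |x|) * (exp (-x) - 1 + x) := by
  rcases le_total 0 x with hx | hx
  · rw [abs_of_nonneg hx]
    nlinarith [two_sub_le_two_add_mul_exp_neg hx]
  · rw [abs_of_nonpos hx]
    nlinarith [quadratic_le_exp_of_nonneg (neg_nonneg.2 hx)]

lemma mul_sq_le_exp_neg_mul_exp_neg_sub_one_add {γ a x : ℝ} (ha : |a| ≤ γ) (hx : |x| ≤ 2 * γ) :
    exp (-γ) / (2 + 2 * γ) * x ^ 2 ≤ exp (-a) * (exp (-x) - 1 + x) := by
  have hγ : 0 ≤ γ := (abs_nonneg a).trans ha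
  have hg : 0 ≤ exp (-x) - 1 + x := by linarith [add_one_le_exp (-x)]
  have hquad : x ^ 2 ≤ (2 + 2 * γ) * (exp (-x) - 1 + x) :=
    (sq_le_two_add_abs_mul_exp_neg_sub_one_add x).trans (by gcongr)
  calc exp (-γ) / (2 + 2 * γ) * x ^ 2 ≤ exp (-γ) * (exp (-x) - 1 + x) := by
        rw [div_mul_eq_mul_div, div_le_iff₀ (by positivity), mul_assoc, mul_comm _ (2 + 2 * γ)]
        gcongr
    _ ≤ exp (-a) * (exp (-x) - 1 + x) := by
        gcongr
        linarith [le_abs_self a]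

lemma abs_dotProduct_le_sum_abs {ι : Type*} [Fintype ι] {a : ι → ℝ} (ha : ∀ i, |a i| ≤ 1)
    (θ : ι → ℝ) : |a ⬝ᵥ θ| ≤ ∑ i, |θ i| :=
  (abs_sum_le_sum_abs _ _).trans <| sum_le_sum fun i _ => by
    rw [abs_mul]; exact mul_le_of_le_one_left (abs_nonneg _) (ha i)

lemma dotProduct_update {ι : Type*} [Fintype ι] [DecidableEq ι] (a θ : ι → ℝ) (i : ι) (s : ℝ) :
    a ⬝ᵥ Function.update θ i s = a ⬝ᵥ θ + a i * (s - θ i) := by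
  have : Function.update θ i s = θ + Pi.single i (s - θ i) := by
    ext j; by_cases h : j = i <;> simp [h]
  rw [this, dotProduct_add, dotProduct_single]

section ScreeningLoss

variable {Ω ι : Type*} [Fintype Ω] [Fintype ι] (μ : Ω → ℝ) (A : Ω → ι → ℝ)

noncomputable def screeningLoss (θ : ι → ℝ) : ℝ :=
  ∑ c, μ c * exp (-(A c ⬝ᵥ θ))

noncomputable def screeningLossGrad (θ : ι → ℝ) (i : ι) : ℝ :=
  -∑ c, μ c * exp (-(A c ⬝ᵥ θ)) * A c i

lemma hasDerivAt_screeningLoss_update [DecidableEq ι] (θ : ι → ℝ) (i : ι) :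
    HasDerivAt (fun s => screeningLoss μ A (Function.update θ i s))
      (screeningLossGrad μ A θ i) (θ i) := by
  simp only [screeningLoss, screeningLossGrad, dotProduct_update, ← sum_neg_distrib]
  refine HasDerivAt.fun_sum fun c _ => ?_
  have hlin := (((hasDerivAt_id' (θ i)).sub_const (θ i)).const_mul (A c i)).const_add
    (A c ⬝ᵥ θ)
  refine (hlin.neg.exp.const_mul (μ c)).congr_deriv ?_
  simp only [Pi.neg_apply, sub_self, mul_zero, add_zero, mul_one]
  ring

lemma screeningLoss_bregman (θ₀ θ : ι → ℝ) :
    screeningLoss μ A θ - screeningLoss μ A θ₀ - ∑ i, screeningLossGrad μ A θ₀ i * (θ i - θ₀ i)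
      = ∑ c, μ c * exp (-(A c ⬝ᵥ θ₀)) *
          (exp (-(A c ⬝ᵥ (θ - θ₀))) - 1 + A c ⬝ᵥ (θ - θ₀)) := by
  have hgrad : ∑ i, screeningLossGrad μ A θ₀ i * (θ i - θ₀ i)
      = -∑ c, μ c * exp (-(A c ⬝ᵥ θ₀)) * A c ⬝ᵥ (θ - θ₀) := by
    simp only [screeningLossGrad, neg_mul, sum_neg_distrib, sum_mul, dotProduct, mul_sum]
    rw [sum_comm]
    simp only [Pi.sub_apply, mul_assoc]
  have hsplit : ∀ c, exp (-(A c ⬝ᵥ θ)) = exp (-(A c ⬝ᵥ θ₀)) * exp (-(A c ⬝ᵥ (θ - θ₀))) := by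
    intro c
    rw [← exp_add, dotProduct_sub]
    ring_nf
  simp only [screeningLoss, hgrad, hsplit, ← sum_sub_distrib, sub_neg_eq_add, ← sum_add_distrib]
  refine sum_congr rfl fun c _ => ?_
  ring

theorem le_screeningLoss_bregman (hμ : ∀ c, 0 ≤ μ c) (hA : ∀ c i, |A c i| ≤ 1) {γ : ℝ}
    {θ₀ θ : ι → ℝ} (hθ₀ : ∑ i, |θ₀ i| ≤ γ) (hθ : ∑ i, |θ i| ≤ γ) :
    exp (-γ) / (2 + 2 * γ) * ∑ c, μ c * (A c ⬝ᵥ (θ - θ₀)) ^ 2 ≤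
      screeningLoss μ A θ - screeningLoss μ A θ₀
        - ∑ i, screeningLossGrad μ A θ₀ i * (θ i - θ₀ i) := by
  rw [screeningLoss_bregman, mul_sum]
  refine sum_le_sum fun c _ => ?_
  have hΔ : ∑ i, |(θ - θ₀) i| ≤ 2 * γ := by
    calc ∑ i, |(θ - θ₀) i| ≤ ∑ i, (|θ i| + |θ₀ i|) := sum_le_sum fun i _ => abs_sub _ _
      _ ≤ 2 * γ := by rw [sum_add_distrib]; linarith
  have key := mul_sq_le_exp_neg_mul_exp_neg_sub_one_add
    ((abs_dotProduct_le_sum_abs (hA c) θ₀).trans hθ₀)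
    ((abs_dotProduct_le_sum_abs (hA c) (θ - θ₀)).trans hΔ)
  rw [mul_left_comm, mul_assoc]
  exact mul_le_mul_of_nonneg_left key (hμ c)

end ScreeningLoss

lemma mul_add_sum_erase_eq_dotProduct {ι : Type*} [Fintype ι] [DecidableEq ι] (s θ : ι → ℝ)
    (u : ι) : s u * (θ u + ∑ v ∈ univ.erase u, θ v * s v) = (s u • Function.update s u 1) ⬝ᵥ θ := by
  rw [dotProduct, ← add_sum_erase _ _ (mem_univ u), mul_add, mul_sum]
  congr 1
  · simp
  · refine sum_congr rfl fun v hv => ?_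
    simp only [Pi.smul_apply, Function.update_of_ne (ne_of_mem_erase hv), smul_eq_mul]
    ring

open Finset in
theorem curvature_lower_bound_general (p : ℕ) (u : Fin p) (γ : ℝ)
    (μ : (Fin p → Bool) → ℝ) (hμ0 : ∀ c, 0 ≤ μ c)
    (sp : Bool → ℝ) (hsp : sp = fun b => if b then 1 else -1)
    (Eu : (Fin p → Bool) → (Fin p → ℝ) → ℝ)
    (hEu : Eu = fun c θ => sp (c u) * (θ u + ∑ v ∈ univ.erase u, θ v * sp (c v)))
    (L : (Fin p → ℝ) → ℝ)
    (hL : L = fun θ => ∑ c, μ c * Real.exp (-(Eu c θ)))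
    (θstar θ : Fin p → ℝ)
    (hθstar : ∑ i, |θstar i| ≤ γ) (hθ : ∑ i, |θ i| ≤ γ)
    (G : Fin p → ℝ)
    (hG : ∀ i, HasDerivAt (fun s => L (Function.update θstar i s)) (G i) (θstar i)) :
    L θ - L θstar - ∑ i, G i * (θ i - θstar i) ≥
      (Real.exp (-γ) / (2 + 2 * γ)) *
        ∑ c, μ c * (Eu c (fun i => θ i - θstar i)) ^ 2 := by
  set A : (Fin p → Bool) → Fin p → ℝ := fun c => sp (c u) • Function.update (sp ∘ c) u 1
  have hsp_abs : ∀ b, |sp b| ≤ 1 := by rw [hsp]; intro b; cases b <;> norm_num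
  have hA : ∀ c i, |A c i| ≤ 1 := fun c i => by
    simp only [A, Pi.smul_apply, smul_eq_mul, abs_mul]
    refine mul_le_one₀ (hsp_abs _) (abs_nonneg _) ?_
    rcases eq_or_ne i u with rfl | h
    · simp
    · simpa [Function.update_of_ne h] using hsp_abs (c i)
  have hEuA : ∀ c θ, Eu c θ = A c ⬝ᵥ θ := fun c θ => by
    rw [hEu]; exact mul_add_sum_erase_eq_dotProduct (sp ∘ c) θ u
  have hLA : L = screeningLoss μ A := by
    rw [hL]; funext θ; simp only [screeningLoss, hEuA]
  have hGA : G = screeningLossGrad μ A θstar := funext fun i =>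
    (hG i).unique (hLA ▸ hasDerivAt_screeningLoss_update μ A θstar i)
  simp only [hLA, hGA, hEuA]
  exact le_screeningLoss_bregman μ A hμ0 hA hθstar hθ

open Finset in
/-- Curvature lower bound for the interaction screening loss of an Ising model of
ℓ1-width at most `γ`:
`δL*(θ) ≥ (e^{-γ}/(2 + 2γ)) · E_μ[(E_u(σ; θ − θ*))²]`. -/
theorem curvature_lower_bound (p : ℕ) (u : Fin p) (γ : ℝ) (hγ : 0 < γ)
    (μ : (Fin p → Bool) → ℝ) (hμ0 : ∀ c, 0 ≤ μ c) (hμ1 : ∑ c, μ c = 1)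
    (sp : Bool → ℝ) (hsp : sp = fun b => if b then 1 else -1)
    (Eu : (Fin p → Bool) → (Fin p → ℝ) → ℝ)
    (hEu : Eu = fun c θ => sp (c u) * (θ u + ∑ v ∈ univ.erase u, θ v * sp (c v)))
    (L : (Fin p → ℝ) → ℝ)
    (hL : L = fun θ => ∑ c, μ c * Real.exp (-(Eu c θ)))
    (θstar θ : Fin p → ℝ)
    (hθstar : ∑ i, |θstar i| ≤ γ) (hθ : ∑ i, |θ i| ≤ γ)
    (G : Fin p → ℝ)
    (hG : ∀ i, HasDerivAt (fun s => L (Function.update θstar i s)) (G i) (θstar i)) :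
    L θ - L θstar - ∑ i, G i * (θ i - θstar i) ≥
      (Real.exp (-γ) / (2 + 2 * γ)) *
        ∑ c, μ c * (Eu c (fun i => θ i - θstar i)) ^ 2 :=
  curvature_lower_bound_general p u γ μ hμ0 sp hsp Eu hEu L hL θstar θ hθstar hθ G hG
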